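/- Let ε ≥ 0 and R > 0, and let w, ψ : ℝ × ℝ² → ℝ be smooth functions such that for every t ∈ ℝ: on Ω, ∂_t(w − ε·Δw) = (1/R)·Δw + R·ψ_θ + J(ψ, w − ε·Δw), and on ∂Ω, w(t,·) = 0 and ψ(t,·) = 0. Then for every t, (1/2)·(d/dt)( ‖w‖² + ε‖∇w‖² ) = −(1/R)·‖∇w‖² + R·⟨ψ_θ, w⟩ + ε·⟨J(Δw, ψ), w⟩, where all spatial norms and inner products are taken at time t. -/

import Mathlib

/-!
Write `u = ∂ₜw`. Differentiating under the integral sign and integrating by parts once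
(`w` vanishes on the circle) gives `½ d/dt (‖w‖² + ε‖∇w‖²) = ⟨w, u - εΔu⟩`, and by symmetry of
mixed partials `u - εΔu = ∂ₜ(w - εΔw)`, which the equation replaces by
`(1/R)Δw + Rψ_θ + J(ψ, w) + εJ(Δw, ψ)`. Green's identity gives `⟨w, Δw⟩ = -‖∇w‖²`, and
`⟨J(ψ, w), w⟩ = 0` because `2wJ(ψ, w)` is the divergence of a field vanishing on the circle.
All boundary terms vanish by Fubini: every chord of the disk ends on the circle.
-/

open MeasureTheory

noncomputable section

/-- Partial derivative with respect to the first (x) variable. -/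
def pdx (f : ℝ × ℝ → ℝ) : ℝ × ℝ → ℝ := fun p => deriv (fun x => f (x, p.2)) p.1

/-- Partial derivative with respect to the second (y) variable. -/
def pdy (f : ℝ × ℝ → ℝ) : ℝ × ℝ → ℝ := fun p => deriv (fun y => f (p.1, y)) p.2

/-- The Laplacian Δf = f_xx + f_yy. -/
def lap (f : ℝ × ℝ → ℝ) : ℝ × ℝ → ℝ := fun p => pdx (pdx f) p + pdy (pdy f) p

/-- The azimuthal derivative f_θ = x f_y − y f_x. -/
def azim (f : ℝ × ℝ → ℝ) : ℝ × ℝ → ℝ := fun p => p.1 * pdy f p - p.2 * pdx f p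

/-- The Jacobian (advection) bilinear form J(f,g) = f_x g_y − f_y g_x. -/
def jac (f g : ℝ × ℝ → ℝ) : ℝ × ℝ → ℝ := fun p => pdx f p * pdy g p - pdy f p * pdx g p

/-- The open unit disk Ω. -/
def disk : Set (ℝ × ℝ) := {p | p.1 ^ 2 + p.2 ^ 2 < 1}

/-- The unit circle ∂Ω. -/
def bdry : Set (ℝ × ℝ) := {p | p.1 ^ 2 + p.2 ^ 2 = 1}

/-- The L² inner product ⟨f,g⟩ = ∫_Ω f g dA. -/
def ip (f g : ℝ × ℝ → ℝ) : ℝ := ∫ p in disk, f p * g p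

/-- The squared L² norm ‖f‖² over Ω. -/
def nsq (f : ℝ × ℝ → ℝ) : ℝ := ∫ p in disk, (f p) ^ 2

/-- The squared L² norm of the gradient: ‖∇f‖² = ‖f_x‖² + ‖f_y‖². -/
def gradNsq (f : ℝ × ℝ → ℝ) : ℝ := nsq (pdx f) + nsq (pdy f)

open Set Filter Function
open scoped ContDiff

lemma measurableSet_disk : MeasurableSet disk :=
  (isOpen_lt (by fun_prop) continuous_const).measurableSet

lemma isBounded_disk : Bornology.IsBounded disk := by
  refine (Metric.isBounded_Icc (-1 : ℝ) 1).prod (Metric.isBounded_Icc (-1 : ℝ) 1) |>.subset ?_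
  intro p (hp : p.1 ^ 2 + p.2 ^ 2 < 1)
  exact ⟨abs_le.1 (abs_le_one_iff_mul_self_le_one.2 (by nlinarith [sq_nonneg p.2])),
    abs_le.1 (abs_le_one_iff_mul_self_le_one.2 (by nlinarith [sq_nonneg p.1]))⟩

lemma Continuous.integrableOn_disk {f : ℝ × ℝ → ℝ} (hf : Continuous f) :
    IntegrableOn f disk :=
  (hf.continuousOn.integrableOn_compact isBounded_disk.isCompact_closure).mono_set subset_closure

lemma preimage_swap_disk : Prod.swap ⁻¹' disk = disk := by
  ext p
  simp only [disk, mem_preimage, mem_ofPred_eq, Prod.fst_swap, Prod.snd_swap, add_comm]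

lemma setIntegral_disk_comp_swap (g : ℝ × ℝ → ℝ) :
    ∫ p in disk, g p.swap = ∫ p in disk, g p := by
  have := (Measure.measurePreserving_swap (μ := (volume : Measure ℝ)) (ν := volume)
    ).setIntegral_preimage_emb MeasurableEquiv.prodComm.measurableEmbedding g disk
  rwa [preimage_swap_disk] at this

lemma preimage_mk_disk (x : ℝ) :
    Prod.mk x ⁻¹' disk = Ioo (-√(1 - x ^ 2)) √(1 - x ^ 2) := by
  ext y
  simp only [disk, mem_preimage, mem_ofPred_eq, mem_Ioo, ← abs_lt, Real.lt_sqrt (abs_nonneg y),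
    sq_abs]
  constructor <;> intro h <;> linarith

section PartialDerivatives

variable {f g h : ℝ × ℝ → ℝ} {p : ℝ × ℝ}

lemma hasDerivAt_pdx {x y : ℝ} (hf : DifferentiableAt ℝ f (x, y)) :
    HasDerivAt (fun x => f (x, y)) (fderiv ℝ f (x, y) (1, 0)) x :=
  hf.hasFDerivAt.comp_hasDerivAt x ((hasDerivAt_id x).prodMk (hasDerivAt_const x y))

lemma hasDerivAt_pdy {x y : ℝ} (hf : DifferentiableAt ℝ f (x, y)) :
    HasDerivAt (fun y => f (x, y)) (fderiv ℝ f (x, y) (0, 1)) y :=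
  hf.hasFDerivAt.comp_hasDerivAt y ((hasDerivAt_const y x).prodMk (hasDerivAt_id y))

lemma pdx_eq_fderiv (hf : DifferentiableAt ℝ f p) : pdx f p = fderiv ℝ f p (1, 0) :=
  (hasDerivAt_pdx hf).deriv

lemma pdy_eq_fderiv (hf : DifferentiableAt ℝ f p) : pdy f p = fderiv ℝ f p (0, 1) :=
  (hasDerivAt_pdy hf).deriv

lemma pdx_eq_pdy_comp_swap (f : ℝ × ℝ → ℝ) : pdx f = pdy (f ∘ Prod.swap) ∘ Prod.swap := rfl

lemma ContDiff.fderiv_apply_const {E : Type*} [NormedAddCommGroup E] [NormedSpace ℝ E]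
    {F : E → ℝ} (hF : ContDiff ℝ ∞ F) (v : E) : ContDiff ℝ ∞ (fun x => fderiv ℝ F x v) :=
  (hF.fderiv_right le_rfl).clm_apply contDiff_const

lemma continuous_pdx (hf : ContDiff ℝ 1 f) : Continuous (pdx f) :=
  ((hf.continuous_fderiv one_ne_zero).clm_apply continuous_const).congr fun _ =>
    (pdx_eq_fderiv (hf.differentiable one_ne_zero).differentiableAt).symm

lemma continuous_pdy (hf : ContDiff ℝ 1 f) : Continuous (pdy f) :=
  ((hf.continuous_fderiv one_ne_zero).clm_apply continuous_const).congr fun _ =>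
    (pdy_eq_fderiv (hf.differentiable one_ne_zero).differentiableAt).symm

lemma contDiff_pdx (hf : ContDiff ℝ ∞ f) : ContDiff ℝ ∞ (pdx f) := by
  convert hf.fderiv_apply_const ((1 : ℝ), (0 : ℝ)) using 1
  exact funext fun p => pdx_eq_fderiv (hf.differentiable (by simp)).differentiableAt

lemma contDiff_pdy (hf : ContDiff ℝ ∞ f) : ContDiff ℝ ∞ (pdy f) := by
  convert hf.fderiv_apply_const ((0 : ℝ), (1 : ℝ)) using 1
  exact funext fun p => pdy_eq_fderiv (hf.differentiable (by simp)).differentiableAt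

lemma contDiff_lap (hf : ContDiff ℝ ∞ f) : ContDiff ℝ ∞ (lap f) :=
  (contDiff_pdx (contDiff_pdx hf)).add (contDiff_pdy (contDiff_pdy hf))

lemma contDiff_azim (hf : ContDiff ℝ ∞ f) : ContDiff ℝ ∞ (azim f) :=
  (contDiff_fst.mul (contDiff_pdy hf)).sub (contDiff_snd.mul (contDiff_pdx hf))

lemma contDiff_jac (hf : ContDiff ℝ ∞ f) (hg : ContDiff ℝ ∞ g) : ContDiff ℝ ∞ (jac f g) :=
  ((contDiff_pdx hf).mul (contDiff_pdy hg)).sub ((contDiff_pdy hf).mul (contDiff_pdx hg))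

lemma pdx_mul (hf : DifferentiableAt ℝ f p) (hg : DifferentiableAt ℝ g p) :
    pdx (fun q => f q * g q) p = pdx f p * g p + f p * pdx g p := by
  rw [pdx_eq_fderiv hf, pdx_eq_fderiv hg]
  exact ((hasDerivAt_pdx hf).mul (hasDerivAt_pdx hg)).deriv

lemma pdy_mul (hf : DifferentiableAt ℝ f p) (hg : DifferentiableAt ℝ g p) :
    pdy (fun q => f q * g q) p = pdy f p * g p + f p * pdy g p := by
  rw [pdy_eq_fderiv hf, pdy_eq_fderiv hg]
  exact ((hasDerivAt_pdy hf).mul (hasDerivAt_pdy hg)).deriv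

lemma pdx_sub_const_mul (hf : DifferentiableAt ℝ f p) (hg : DifferentiableAt ℝ g p) (c : ℝ) :
    pdx (fun q => f q - c * g q) p = pdx f p - c * pdx g p := by
  rw [pdx_eq_fderiv hf, pdx_eq_fderiv hg]
  exact ((hasDerivAt_pdx hf).sub ((hasDerivAt_pdx hg).const_mul c)).deriv

lemma pdy_sub_const_mul (hf : DifferentiableAt ℝ f p) (hg : DifferentiableAt ℝ g p) (c : ℝ) :
    pdy (fun q => f q - c * g q) p = pdy f p - c * pdy g p := by
  rw [pdy_eq_fderiv hf, pdy_eq_fderiv hg]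
  exact ((hasDerivAt_pdy hf).sub ((hasDerivAt_pdy hg).const_mul c)).deriv

lemma jac_sub_const_mul (hg : DifferentiableAt ℝ g p) (hh : DifferentiableAt ℝ h p) (c : ℝ) :
    jac f (fun q => g q - c * h q) p = jac f g p + c * jac h f p := by
  simp only [jac, pdx_sub_const_mul hg hh, pdy_sub_const_mul hg hh]
  ring

end PartialDerivatives

lemma fderiv_fderiv_apply_comm {E : Type*} [NormedAddCommGroup E] [NormedSpace ℝ E]
    {F : E → ℝ} (hF : ContDiff ℝ 2 F) (x u v : E) :
    fderiv ℝ (fun y => fderiv ℝ F y u) x v = fderiv ℝ (fun y => fderiv ℝ F y v) x u := by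
  have hdiff : DifferentiableAt ℝ (fderiv ℝ F) x :=
    ((hF.fderiv_right (m := 1) (by norm_num)).differentiable one_ne_zero).differentiableAt
  rw [fderiv_clm_apply hdiff (differentiableAt_const u),
    fderiv_clm_apply hdiff (differentiableAt_const v)]
  simpa using (hF.contDiffAt.isSymmSndFDerivAt (by simp)).eq v u

lemma pdx_pdy_comm {f : ℝ × ℝ → ℝ} (hf : ContDiff ℝ ∞ f) : pdx (pdy f) = pdy (pdx f) := by
  have hd := hf.differentiable (by simp)
  funext p
  rw [pdx_eq_fderiv ((contDiff_pdy hf).differentiable (by simp)).differentiableAt,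
    pdy_eq_fderiv ((contDiff_pdx hf).differentiable (by simp)).differentiableAt,
    show pdy f = fun p => fderiv ℝ f p (0, 1) from funext fun p => pdy_eq_fderiv (hd p),
    show pdx f = fun p => fderiv ℝ f p (1, 0) from funext fun p => pdx_eq_fderiv (hd p)]
  exact fderiv_fderiv_apply_comm (hf.of_le (WithTop.coe_le_coe.2 le_top)) p _ _

section IntegrationByParts

variable {f g h : ℝ × ℝ → ℝ}

lemma ip_comm (f g : ℝ × ℝ → ℝ) : ip f g = ip g f :=
  integral_congr_ae (ae_of_all _ fun p => mul_comm (f p) (g p))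

lemma nsq_eq_ip (f : ℝ × ℝ → ℝ) : nsq f = ip f f :=
  integral_congr_ae (ae_of_all _ fun p => sq (f p))

lemma ip_const_mul_right (f g : ℝ × ℝ → ℝ) (c : ℝ) : ip f (fun p => c * g p) = c * ip f g := by
  simp only [ip, mul_left_comm (f _) c, integral_const_mul]

lemma ip_add_right (hf : Continuous f) (hg : Continuous g) (hh : Continuous h) :
    ip f (fun p => g p + h p) = ip f g + ip f h := by
  simp only [ip, mul_add]
  exact integral_add (hf.mul hg).integrableOn_disk (hf.mul hh).integrableOn_disk

lemma ip_sub_right (hf : Continuous f) (hg : Continuous g) (hh : Continuous h) :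
    ip f (fun p => g p - h p) = ip f g - ip f h := by
  simp only [ip, mul_sub]
  exact integral_sub (hf.mul hg).integrableOn_disk (hf.mul hh).integrableOn_disk

/-- Integrating first in `y`, each vertical chord of the disk has both endpoints on the circle
(or is empty, when `√(1 - x²)` is the junk value `0`). -/
lemma integral_pdy_eq_zero (hf : ContDiff ℝ 1 f) (hb : ∀ p ∈ bdry, f p = 0) :
    ∫ p in disk, pdy f p = 0 := by
  have hd : Differentiable ℝ f := hf.differentiable one_ne_zero
  have hc : Continuous (pdy f) := continuous_pdy hf
  have hchord : ∀ x, ∫ y, disk.indicator (pdy f) (x, y) = 0 := by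
    intro x
    set s := √(1 - x ^ 2)
    calc ∫ y, disk.indicator (pdy f) (x, y) = ∫ y in Ioo (-s) s, pdy f (x, y) := by
          rw [← integral_indicator measurableSet_Ioo, ← preimage_mk_disk]; rfl
      _ = ∫ y in -s..s, pdy f (x, y) := by
          rw [intervalIntegral.integral_of_le (neg_le_self (Real.sqrt_nonneg _)),
            integral_Ioc_eq_integral_Ioo]
      _ = f (x, s) - f (x, -s) :=
          intervalIntegral.integral_eq_sub_of_hasDerivAt (f := fun y => f (x, y))
            (f' := fun y => pdy f (x, y))
            (fun y _ => by rw [pdy_eq_fderiv (hd (x, y))]; exact hasDerivAt_pdy (hd (x, y)))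
            ((hc.comp (continuous_const.prodMk continuous_id)).intervalIntegrable _ _)
      _ = 0 := by
          rcases le_or_gt (x ^ 2) 1 with hx | hx
          · have hs : s ^ 2 = 1 - x ^ 2 := Real.sq_sqrt (by linarith)
            rw [hb (x, s) (show x ^ 2 + s ^ 2 = 1 by linarith),
              hb (x, -s) (show x ^ 2 + (-s) ^ 2 = 1 by rw [neg_sq]; linarith), sub_zero]
          · rw [show s = 0 from Real.sqrt_eq_zero'.2 (by linarith), neg_zero, sub_self]
  rw [← integral_indicator measurableSet_disk, Measure.volume_eq_prod,
    integral_prod _ (hc.integrableOn_disk.integrable_indicator measurableSet_disk)]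
  simp only [hchord, integral_zero]

lemma integral_pdx_eq_zero (hf : ContDiff ℝ 1 f) (hb : ∀ p ∈ bdry, f p = 0) :
    ∫ p in disk, pdx f p = 0 := by
  rw [pdx_eq_pdy_comp_swap]
  exact (setIntegral_disk_comp_swap _).trans
    (integral_pdy_eq_zero (hf.comp (contDiff_snd.prodMk contDiff_fst))
      fun p (hp : p.1 ^ 2 + p.2 ^ 2 = 1) => hb p.swap (show p.2 ^ 2 + p.1 ^ 2 = 1 by linarith))

lemma ip_pdx_right (hf : ContDiff ℝ 1 f) (hg : ContDiff ℝ 1 g) (hb : ∀ p ∈ bdry, f p = 0) :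
    ip f (pdx g) = -ip (pdx f) g := by
  have h := integral_pdx_eq_zero (hf.mul hg) fun p hp => by simp [hb p hp]
  simp only [pdx_mul (hf.differentiable one_ne_zero _) (hg.differentiable one_ne_zero _)] at h
  have hsplit : ∫ p in disk, (pdx f p * g p + f p * pdx g p) = ip (pdx f) g + ip f (pdx g) :=
    integral_add ((continuous_pdx hf).mul hg.continuous).integrableOn_disk
      (hf.continuous.mul (continuous_pdx hg)).integrableOn_disk
  linarith

lemma ip_pdy_right (hf : ContDiff ℝ 1 f) (hg : ContDiff ℝ 1 g) (hb : ∀ p ∈ bdry, f p = 0) :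
    ip f (pdy g) = -ip (pdy f) g := by
  have h := integral_pdy_eq_zero (hf.mul hg) fun p hp => by simp [hb p hp]
  simp only [pdy_mul (hf.differentiable one_ne_zero _) (hg.differentiable one_ne_zero _)] at h
  have hsplit : ∫ p in disk, (pdy f p * g p + f p * pdy g p) = ip (pdy f) g + ip f (pdy g) :=
    integral_add ((continuous_pdy hf).mul hg.continuous).integrableOn_disk
      (hf.continuous.mul (continuous_pdy hg)).integrableOn_disk
  linarith

lemma ip_lap_right (hf : ContDiff ℝ ∞ f) (hg : ContDiff ℝ ∞ g) (hb : ∀ p ∈ bdry, f p = 0) :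
    ip f (lap g) = -(ip (pdx f) (pdx g) + ip (pdy f) (pdy g)) := by
  have h1 : ContDiff ℝ 1 f := hf.of_le (by simp)
  have hgx : ContDiff ℝ 1 (pdx g) := (contDiff_pdx hg).of_le (by simp)
  have hgy : ContDiff ℝ 1 (pdy g) := (contDiff_pdy hg).of_le (by simp)
  unfold lap
  rw [ip_add_right hf.continuous (continuous_pdx hgx) (continuous_pdy hgy),
    ip_pdx_right h1 hgx hb, ip_pdy_right h1 hgy hb, neg_add]

/-- `2 g J(f, g) = ∂_y (f_x g²) - ∂_x (f_y g²)`, by equality of mixed partials of `f`. -/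
lemma ip_jac_self (hf : ContDiff ℝ ∞ f) (hg : ContDiff ℝ ∞ g) (hb : ∀ p ∈ bdry, g p = 0) :
    ip (jac f g) g = 0 := by
  have hd : ∀ {k : ℝ × ℝ → ℝ}, ContDiff ℝ ∞ k → ∀ p, DifferentiableAt ℝ k p :=
    fun hk => hk.differentiable (by simp)
  have hg2 : ContDiff ℝ ∞ (fun q => g q * g q) := hg.mul hg
  have hA := (contDiff_pdx hf).mul hg2
  have hB := (contDiff_pdy hf).mul hg2
  have hpt : ∀ p, jac f g p * g p = (pdy (fun q => pdx f q * (g q * g q)) p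
      - pdx (fun q => pdy f q * (g q * g q)) p) / 2 := by
    intro p
    rw [pdy_mul (hd (contDiff_pdx hf) p) (hd hg2 p), pdx_mul (hd (contDiff_pdy hf) p) (hd hg2 p),
      pdy_mul (hd hg p) (hd hg p), pdx_mul (hd hg p) (hd hg p), pdx_pdy_comm hf, jac]
    ring
  rw [ip, integral_congr_ae (ae_of_all _ hpt), integral_div,
    integral_sub (continuous_pdy (hA.of_le (by simp))).integrableOn_disk
      (continuous_pdx (hB.of_le (by simp))).integrableOn_disk,
    integral_pdy_eq_zero (hA.of_le (by simp)) fun p hp => by simp [hb p hp],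
    integral_pdx_eq_zero (hB.of_le (by simp)) fun p hp => by simp [hb p hp]]
  simp

end IntegrationByParts

section TimeDependent

variable {E : Type*} [NormedAddCommGroup E] [NormedSpace ℝ E]

def timeDeriv (w : ℝ → E → ℝ) (t : ℝ) : E → ℝ := fun x => deriv (fun s => w s x) t

lemma hasDerivAt_timeDeriv {w : ℝ → E → ℝ} (hw : Differentiable ℝ (uncurry w)) (t : ℝ) (x : E) :
    HasDerivAt (fun s => w s x) (timeDeriv w t x) t := by
  have h : DifferentiableAt ℝ (uncurry w ∘ fun s => (s, x)) t :=
    (hw (t, x)).comp t (differentiableAt_id.prodMk (differentiableAt_const x))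
  exact h.hasDerivAt

lemma uncurry_timeDeriv {w : ℝ → E → ℝ} (hw : Differentiable ℝ (uncurry w)) :
    uncurry (timeDeriv w) = fun q => fderiv ℝ (uncurry w) q (1, 0) := by
  funext q
  have h : HasDerivAt (uncurry w ∘ fun s => (s, q.2)) (fderiv ℝ (uncurry w) q (1, 0)) q.1 :=
    (hw q).hasFDerivAt.comp_hasDerivAt q.1 ((hasDerivAt_id q.1).prodMk (hasDerivAt_const q.1 q.2))
  exact h.deriv

lemma contDiff_uncurry_timeDeriv {w : ℝ → E → ℝ} (hw : ContDiff ℝ ∞ (uncurry w)) :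
    ContDiff ℝ ∞ (uncurry (timeDeriv w)) := by
  rw [uncurry_timeDeriv (hw.differentiable (by simp))]
  exact hw.fderiv_apply_const _

lemma contDiff_section {n : WithTop ℕ∞} {w : ℝ → E → ℝ} (hw : ContDiff ℝ n (uncurry w)) (t : ℝ) :
    ContDiff ℝ n (w t) :=
  hw.comp (contDiff_const.prodMk contDiff_id)

lemma hasDerivAt_setIntegral_of_contDiff [FiniteDimensional ℝ E] [MeasurableSpace E]
    [BorelSpace E] {μ : Measure E} [IsFiniteMeasureOnCompacts μ] {s : Set E}
    (hs : MeasurableSet s) (hsb : Bornology.IsBounded s) {F : ℝ → E → ℝ}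
    (hF : ContDiff ℝ 1 (uncurry F)) (t : ℝ) :
    HasDerivAt (fun τ => ∫ x in s, F τ x ∂μ) (∫ x in s, timeDeriv F t x ∂μ) t := by
  have hd : Differentiable ℝ (uncurry F) := hF.differentiable one_ne_zero
  have hF' : Continuous (uncurry (timeDeriv F)) := by
    rw [uncurry_timeDeriv hd]
    exact (hF.continuous_fderiv one_ne_zero).clm_apply continuous_const
  obtain ⟨C, hC⟩ := (isCompact_Icc.prod hsb.isCompact_closure).exists_bound_of_continuousOn
    (s := Icc (t - 1) (t + 1) ×ˢ closure s) hF'.continuousOn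
  have hsec : ∀ τ, Continuous (F τ) := fun τ => (contDiff_section hF τ).continuous
  refine (hasDerivAt_integral_of_dominated_loc_of_deriv_le (bound := fun _ => C)
    (Metric.ball_mem_nhds t one_pos) (Eventually.of_forall fun τ => (hsec τ).aestronglyMeasurable)
    ((hsec t).continuousOn.integrableOn_compact hsb.isCompact_closure |>.mono_set subset_closure)
    (hF'.comp (continuous_const.prodMk continuous_id)).aestronglyMeasurable
    ((ae_restrict_iff' hs).2 (ae_of_all _ fun x hx τ hτ => hC (τ, x) ⟨?_, subset_closure hx⟩))
    (integrableOn_const hsb.measure_lt_top.ne)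
    (ae_of_all _ fun x τ _ => hasDerivAt_timeDeriv hd τ x)).2
  rw [← Real.closedBall_eq_Icc]
  exact Metric.ball_subset_closedBall hτ

end TimeDependent

section Flow

variable {w : ℝ → ℝ × ℝ → ℝ}

lemma uncurry_pdx (hw : Differentiable ℝ (uncurry w)) :
    uncurry (fun s => pdx (w s)) = fun q => fderiv ℝ (uncurry w) q (0, (1, 0)) := by
  funext q
  have h : HasDerivAt (uncurry w ∘ fun x => (q.1, (x, q.2.2))) (fderiv ℝ (uncurry w) q (0, (1, 0)))
      q.2.1 := (hw q).hasFDerivAt.comp_hasDerivAt q.2.1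
    ((hasDerivAt_const _ q.1).prodMk ((hasDerivAt_id _).prodMk (hasDerivAt_const _ q.2.2)))
  exact h.deriv

lemma uncurry_pdy (hw : Differentiable ℝ (uncurry w)) :
    uncurry (fun s => pdy (w s)) = fun q => fderiv ℝ (uncurry w) q (0, (0, 1)) := by
  funext q
  have h : HasDerivAt (uncurry w ∘ fun y => (q.1, (q.2.1, y))) (fderiv ℝ (uncurry w) q (0, (0, 1)))
      q.2.2 := (hw q).hasFDerivAt.comp_hasDerivAt q.2.2
    ((hasDerivAt_const _ q.1).prodMk ((hasDerivAt_const _ q.2.1).prodMk (hasDerivAt_id _)))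
  exact h.deriv

lemma contDiff_uncurry_pdx (hw : ContDiff ℝ ∞ (uncurry w)) :
    ContDiff ℝ ∞ (uncurry fun s => pdx (w s)) := by
  rw [uncurry_pdx (hw.differentiable (by simp))]
  exact hw.fderiv_apply_const _

lemma contDiff_uncurry_pdy (hw : ContDiff ℝ ∞ (uncurry w)) :
    ContDiff ℝ ∞ (uncurry fun s => pdy (w s)) := by
  rw [uncurry_pdy (hw.differentiable (by simp))]
  exact hw.fderiv_apply_const _

lemma pdx_timeDeriv (hw : ContDiff ℝ ∞ (uncurry w)) (t : ℝ) :
    pdx (timeDeriv w t) = timeDeriv (fun s => pdx (w s)) t := by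
  funext p
  have hd : ∀ {v : ℝ → ℝ × ℝ → ℝ}, ContDiff ℝ ∞ (uncurry v) → Differentiable ℝ (uncurry v) :=
    fun hv => hv.differentiable (by simp)
  change uncurry (fun s => pdx (timeDeriv w s)) (t, p)
    = uncurry (timeDeriv fun s => pdx (w s)) (t, p)
  rw [uncurry_pdx (hd (contDiff_uncurry_timeDeriv hw)),
    uncurry_timeDeriv (hd (contDiff_uncurry_pdx hw)), uncurry_timeDeriv (hd hw), uncurry_pdx (hd hw)]
  exact fderiv_fderiv_apply_comm (hw.of_le (WithTop.coe_le_coe.2 le_top)) _ _ _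

lemma pdy_timeDeriv (hw : ContDiff ℝ ∞ (uncurry w)) (t : ℝ) :
    pdy (timeDeriv w t) = timeDeriv (fun s => pdy (w s)) t := by
  funext p
  have hd : ∀ {v : ℝ → ℝ × ℝ → ℝ}, ContDiff ℝ ∞ (uncurry v) → Differentiable ℝ (uncurry v) :=
    fun hv => hv.differentiable (by simp)
  change uncurry (fun s => pdy (timeDeriv w s)) (t, p)
    = uncurry (timeDeriv fun s => pdy (w s)) (t, p)
  rw [uncurry_pdy (hd (contDiff_uncurry_timeDeriv hw)),
    uncurry_timeDeriv (hd (contDiff_uncurry_pdy hw)), uncurry_timeDeriv (hd hw), uncurry_pdy (hd hw)]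
  exact fderiv_fderiv_apply_comm (hw.of_le (WithTop.coe_le_coe.2 le_top)) _ _ _

lemma deriv_sub_const_mul_lap (hw : ContDiff ℝ ∞ (uncurry w)) (ε t : ℝ) (p : ℝ × ℝ) :
    deriv (fun s => w s p - ε * lap (w s) p) t = timeDeriv w t p - ε * lap (timeDeriv w t) p := by
  have hd : ∀ {v : ℝ → ℝ × ℝ → ℝ}, ContDiff ℝ ∞ (uncurry v) →
      HasDerivAt (fun s => v s p) (timeDeriv v t p) t :=
    fun hv => hasDerivAt_timeDeriv (hv.differentiable (by simp)) t p
  have h : HasDerivAt (fun s => w s p - ε * lap (w s) p) (timeDeriv w t p - ε *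
      (timeDeriv (fun s => pdx (pdx (w s))) t p + timeDeriv (fun s => pdy (pdy (w s))) t p)) t :=
    (hd hw).sub (((hd (contDiff_uncurry_pdx (contDiff_uncurry_pdx hw))).add
      (hd (contDiff_uncurry_pdy (contDiff_uncurry_pdy hw)))).const_mul ε)
  rw [h.deriv]
  unfold lap
  rw [pdx_timeDeriv hw, pdx_timeDeriv (contDiff_uncurry_pdx hw), pdy_timeDeriv hw,
    pdy_timeDeriv (contDiff_uncurry_pdy hw)]

lemma hasDerivAt_nsq (hw : ContDiff ℝ 1 (uncurry w)) (t : ℝ) :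
    HasDerivAt (fun s => nsq (w s)) (2 * ip (w t) (timeDeriv w t)) t := by
  have h := hasDerivAt_setIntegral_of_contDiff (μ := volume) measurableSet_disk isBounded_disk
    (F := fun s p => w s p ^ 2) (hw.pow 2) t
  have hpt : timeDeriv (fun s p => w s p ^ 2) t = fun p => 2 * (w t p * timeDeriv w t p) :=
    funext fun p => by
      rw [timeDeriv, ((hasDerivAt_timeDeriv (hw.differentiable one_ne_zero) t p).fun_pow 2).deriv]
      ring
  rwa [hpt, integral_const_mul] at h

lemma hasDerivAt_gradNsq (hw : ContDiff ℝ ∞ (uncurry w)) (t : ℝ) :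
    HasDerivAt (fun s => gradNsq (w s))
      (2 * (ip (pdx (w t)) (pdx (timeDeriv w t)) + ip (pdy (w t)) (pdy (timeDeriv w t)))) t := by
  have h := (hasDerivAt_nsq ((contDiff_uncurry_pdx hw).of_le (by simp)) t).fun_add
    (hasDerivAt_nsq ((contDiff_uncurry_pdy hw).of_le (by simp)) t)
  rwa [← pdx_timeDeriv hw, ← pdy_timeDeriv hw, ← mul_add] at h

/-- Green's identity turns the time derivative of `ε‖∇w‖²` into `-2ε⟨w, Δ ∂ₜw⟩`. -/
lemma hasDerivAt_energy (hw : ContDiff ℝ ∞ (uncurry w)) (ε t : ℝ)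
    (hb : ∀ p ∈ bdry, w t p = 0) :
    HasDerivAt (fun s => nsq (w s) + ε * gradNsq (w s))
      (2 * ip (w t) (fun p => timeDeriv w t p - ε * lap (timeDeriv w t) p)) t := by
  have hwt := contDiff_section hw t
  have hu := contDiff_section (contDiff_uncurry_timeDeriv hw) t
  rw [ip_sub_right (h := fun p => ε * lap (timeDeriv w t) p) hwt.continuous hu.continuous
      (continuous_const.mul (contDiff_lap hu).continuous),
    ip_const_mul_right, ip_lap_right hwt hu hb]
  refine ((hasDerivAt_nsq (hw.of_le (by simp)) t).fun_add
    ((hasDerivAt_gradNsq hw t).const_mul ε)).congr_deriv ?_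
  ring

end Flow

theorem axial_energy_identity_general (ε R : ℝ)
    (w ψ : ℝ → ℝ × ℝ → ℝ)
    (hw : ContDiff ℝ (⊤ : ℕ∞) (fun q : ℝ × (ℝ × ℝ) => w q.1 q.2))
    (hψ : ContDiff ℝ (⊤ : ℕ∞) (fun q : ℝ × (ℝ × ℝ) => ψ q.1 q.2))
    (heq : ∀ t : ℝ, ∀ p ∈ disk,
      deriv (fun s => w s p - ε * lap (w s) p) t
        = (1 / R) * lap (w t) p + R * azim (ψ t) p
          + jac (ψ t) (fun q => w t q - ε * lap (w t) q) p)
    (hbc : ∀ t : ℝ, ∀ p ∈ bdry, w t p = 0 ∧ ψ t p = 0) :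
    ∀ t : ℝ,
      (1 / 2) * deriv (fun s => nsq (w s) + ε * gradNsq (w s)) t
        = -(1 / R) * gradNsq (w t) + R * ip (azim (ψ t)) (w t)
          + ε * ip (jac (lap (w t)) (ψ t)) (w t) := by
  intro t
  have hwt : ContDiff ℝ ∞ (w t) := contDiff_section hw t
  have hψt : ContDiff ℝ ∞ (ψ t) := contDiff_section hψ t
  have hwb : ∀ p ∈ bdry, w t p = 0 := fun p hp => (hbc t p hp).1
  have hmomentum : ip (w t) (fun p => timeDeriv w t p - ε * lap (timeDeriv w t) p)
      = ip (w t) (fun p => (1 / R) * lap (w t) p + R * azim (ψ t) p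
          + (jac (ψ t) (w t) p + ε * jac (lap (w t)) (ψ t) p)) :=
    setIntegral_congr_fun measurableSet_disk fun p hp => by
      dsimp only
      rw [← deriv_sub_const_mul_lap hw, heq t p hp,
        jac_sub_const_mul (hwt.differentiable (by simp) p)
          ((contDiff_lap hwt).differentiable (by simp) p)]
  have cL : Continuous (lap (w t)) := (contDiff_lap hwt).continuous
  have cA : Continuous (azim (ψ t)) := (contDiff_azim hψt).continuous
  have cJ : Continuous (jac (ψ t) (w t)) := (contDiff_jac hψt hwt).continuous
  have cJL : Continuous (jac (lap (w t)) (ψ t)) := (contDiff_jac (contDiff_lap hwt) hψt).continuous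
  rw [(hasDerivAt_energy hw ε t hwb).deriv, hmomentum,
    ip_add_right hwt.continuous (by fun_prop) (by fun_prop),
    ip_add_right hwt.continuous (by fun_prop) (by fun_prop),
    ip_add_right hwt.continuous cJ (by fun_prop),
    ip_const_mul_right, ip_const_mul_right, ip_const_mul_right,
    ip_lap_right hwt hwt hwb, ip_comm (w t) (jac (ψ t) (w t)), ip_jac_self hψt hwt hwb,
    ip_comm (w t), ip_comm (w t), gradNsq, nsq_eq_ip, nsq_eq_ip]
  ring

/-- The axial-velocity energy identity:
`(1/2) d/dt(‖w‖² + ε‖∇w‖²) = −(1/R)‖∇w‖² + R⟨ψ_θ, w⟩ + ε⟨J(Δw,ψ), w⟩`. -/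
theorem axial_energy_identity (ε R : ℝ) (hε : 0 ≤ ε) (hR : 0 < R)
    (w ψ : ℝ → ℝ × ℝ → ℝ)
    (hw : ContDiff ℝ (⊤ : ℕ∞) (fun q : ℝ × (ℝ × ℝ) => w q.1 q.2))
    (hψ : ContDiff ℝ (⊤ : ℕ∞) (fun q : ℝ × (ℝ × ℝ) => ψ q.1 q.2))
    (heq : ∀ t : ℝ, ∀ p ∈ disk,
      deriv (fun s => w s p - ε * lap (w s) p) t
        = (1 / R) * lap (w t) p + R * azim (ψ t) p
          + jac (ψ t) (fun q => w t q - ε * lap (w t) q) p)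
    (hbc : ∀ t : ℝ, ∀ p ∈ bdry, w t p = 0 ∧ ψ t p = 0) :
    ∀ t : ℝ,
      (1 / 2) * deriv (fun s => nsq (w s) + ε * gradNsq (w s)) t
        = -(1 / R) * gradNsq (w t) + R * ip (azim (ψ t)) (w t)
          + ε * ip (jac (lap (w t)) (ψ t)) (w t) :=
  axial_energy_identity_general ε R w ψ hw hψ heq hbc
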